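/- Let M be a topological space, ≪ a binary relation on M with open pasts and open futures, and μ a finite Borel measure on M with full support (μ(W) > 0 for every nonempty open W). Let {U_α}_{α ∈ I} be a nonempty family of past sets that is totally ordered by inclusion. Then there exists a sequence (α_j)_{j ∈ ℕ} in I such that for every α ∈ I there is some j ∈ ℕ with U_{α_j} ⊆ U_α. -/

import Mathlib

/-!
On past sets the measure is strictly monotone: for `A ⊂ B` and `x ∈ B \ A`, the set `I⁺(x) ∩ B`
is a nonempty open subset of `B \ A` (open futures, and `x ≪ y` for some `y ∈ B`), so it has
positive mass. Along a chain, inclusion is therefore read off from the values `μ (U α)`, and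
any sequence of indices whose values are coinitial among them, which exists because `[0, ∞]`
is first countable, is coinitial in the chain.
-/

open Set Filter Topology MeasureTheory

/-- The chronological past of a set `A` with respect to relation `r`. -/
def chronPast {M : Type*} (r : M → M → Prop) (A : Set M) : Set M :=
  {x | ∃ y ∈ A, r x y}

/-- The chronological future of a set `A` with respect to relation `r`. -/
def chronFut {M : Type*} (r : M → M → Prop) (A : Set M) : Set M :=
  {x | ∃ y ∈ A, r y x}

/-- A past set: `I⁻(U) = U`. -/
def IsPastSet {M : Type*} (r : M → M → Prop) (U : Set M) : Prop :=
  chronPast r U = U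

/-- A future set: `I⁺(U) = U`. -/
def IsFutureSet {M : Type*} (r : M → M → Prop) (U : Set M) : Prop :=
  chronFut r U = U

/-- An indecomposable past set (IP): a nonempty past set that is not the union of
two past sets, each a proper subset of it. -/
def IsIP {M : Type*} (r : M → M → Prop) (U : Set M) : Prop :=
  U.Nonempty ∧ IsPastSet r U ∧
    ¬ ∃ A B : Set M, IsPastSet r A ∧ IsPastSet r B ∧ A ⊂ U ∧ B ⊂ U ∧ A ∪ B = U

/-- An indecomposable future set (IF). -/
def IsIF {M : Type*} (r : M → M → Prop) (U : Set M) : Prop :=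
  U.Nonempty ∧ IsFutureSet r U ∧
    ¬ ∃ A B : Set M, IsFutureSet r A ∧ IsFutureSet r B ∧ A ⊂ U ∧ B ⊂ U ∧ A ∪ B = U

/-- A terminal indecomposable past set (TIP): an IP not of the form `I⁻(p)`. -/
def IsTIP {M : Type*} (r : M → M → Prop) (U : Set M) : Prop :=
  IsIP r U ∧ ∀ p : M, U ≠ chronPast r {p}

/-- A terminal indecomposable future set (TIF): an IF not of the form `I⁺(p)`. -/
def IsTIF {M : Type*} (r : M → M → Prop) (U : Set M) : Prop :=
  IsIF r U ∧ ∀ p : M, U ≠ chronFut r {p}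

/-- A minimal TIP: a TIP containing no TIP as a proper subset. -/
def IsMinTIP {M : Type*} (r : M → M → Prop) (U : Set M) : Prop :=
  IsTIP r U ∧ ∀ V : Set M, IsTIP r V → V ⊆ U → V = U

theorem exists_seq_forall_exists_le {α : Type*} [ConditionallyCompleteLinearOrder α]
    [TopologicalSpace α] [OrderTopology α] [FirstCountableTopology α]
    {ι : Type*} [Nonempty ι] (g : ι → α) (hg : BddBelow (range g)) :
    ∃ f : ℕ → ι, ∀ i, ∃ j, g (f j) ≤ g i := by
  by_cases hmin : ∃ i₀, ∀ i, g i₀ ≤ g i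
  · obtain ⟨i₀, hi₀⟩ := hmin
    exact ⟨fun _ => i₀, fun i => ⟨0, hi₀ i⟩⟩
  push Not at hmin
  obtain ⟨u, -, hu, hu_mem⟩ := exists_seq_tendsto_sInf (range_nonempty g) hg
  choose f hf using hu_mem
  refine ⟨f, fun i => ?_⟩
  obtain ⟨k, hk⟩ := hmin i
  have hinf_lt : sInf (range g) < g i := (csInf_le hg ⟨k, rfl⟩).trans_lt hk
  obtain ⟨j, hj⟩ := (hu.eventually (gt_mem_nhds hinf_lt)).exists
  exact ⟨j, (hf j).trans_le hj.le⟩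

section PastSets

variable {M : Type*} {r : M → M → Prop} {A B : Set M}

theorem IsPastSet.isOpen [TopologicalSpace M] (hOpenPast : ∀ p, IsOpen (chronPast r {p}))
    (hA : IsPastSet r A) : IsOpen A := by
  have hA_eq : A = ⋃ y ∈ A, chronPast r {y} := by
    conv_lhs => rw [← hA]
    ext x
    simp [chronPast]
  rw [hA_eq]
  exact isOpen_biUnion fun y _ => hOpenPast y

theorem IsPastSet.disjoint_chronFut_of_notMem (hA : IsPastSet r A) {x : M} (hx : x ∉ A) :
    Disjoint A (chronFut r {x}) := by
  refine Set.disjoint_right.mpr fun w ⟨z, hz, hzw⟩ hwA => hx ?_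
  rw [Set.mem_singleton_iff] at hz
  exact hA ▸ ⟨w, hwA, hz ▸ hzw⟩

theorem IsPastSet.measure_lt_measure_of_ssubset [TopologicalSpace M] [MeasurableSpace M]
    [BorelSpace M] (hOpenPast : ∀ p, IsOpen (chronPast r {p}))
    (hOpenFut : ∀ p, IsOpen (chronFut r {p})) {μ : Measure M} [IsFiniteMeasure μ]
    (hfull : ∀ W : Set M, IsOpen W → W.Nonempty → 0 < μ W)
    (hA : IsPastSet r A) (hB : IsPastSet r B) (hAB : A ⊂ B) :
    μ A < μ B := by
  obtain ⟨x, hxB, hxA⟩ := Set.exists_of_ssubset hAB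
  obtain ⟨y, hyB, hxy⟩ : ∃ y ∈ B, r x y := (hB.symm ▸ hxB : x ∈ chronPast r B)
  set V := chronFut r {x} ∩ B
  have hV_open : IsOpen V := (hOpenFut x).inter (hB.isOpen hOpenPast)
  have hAV : Disjoint A V := (hA.disjoint_chronFut_of_notMem hxA).mono_right inter_subset_left
  calc μ A < μ A + μ V :=
        ENNReal.lt_add_right (measure_ne_top μ A) (hfull V hV_open ⟨y, ⟨x, rfl, hxy⟩, hyB⟩).ne'
    _ = μ (A ∪ V) := (measure_union hAV hV_open.measurableSet).symm
    _ ≤ μ B := measure_mono (union_subset hAB.subset inter_subset_right)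

end PastSets

/-- From a nonempty family of past sets totally ordered by inclusion, one
can extract a countable cofinal (downwards) subsequence, given a finite Borel measure of
full support. -/
theorem stmt_9 {M : Type*} [TopologicalSpace M] [MeasurableSpace M] [BorelSpace M]
    (r : M → M → Prop)
    (hOpenPast : ∀ p : M, IsOpen (chronPast r {p}))
    (hOpenFut : ∀ p : M, IsOpen (chronFut r {p}))
    (μ : Measure M) [IsFiniteMeasure μ]
    (hfull : ∀ W : Set M, IsOpen W → W.Nonempty → 0 < μ W)
    {ι : Type*} [Nonempty ι] (U : ι → Set M)
    (hpast : ∀ α, IsPastSet r (U α))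
    (hchain : ∀ α β : ι, U α ⊆ U β ∨ U β ⊆ U α) :
    ∃ f : ℕ → ι, ∀ α : ι, ∃ j : ℕ, U (f j) ⊆ U α := by
  obtain ⟨f, hf⟩ := exists_seq_forall_exists_le (fun α => μ (U α)) (OrderBot.bddBelow _)
  refine ⟨f, fun α => ?_⟩
  obtain ⟨j, hj⟩ := hf α
  refine ⟨j, (hchain (f j) α).elim id fun hαj => ?_⟩
  rcases Set.eq_or_ssubset_of_subset hαj with heq | hlt
  · exact heq.ge
  · exact absurd hj
      ((hpast α).measure_lt_measure_of_ssubset hOpenPast hOpenFut hfull (hpast (f j)) hlt).not_ge
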